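/- arXiv:2510.23677 — 6 statements merged into one kernel-verified Lean document; each statement's English description precedes it below -/
import Mathlib

section
/- For any integer k ≥ 1, the constant coefficient (coefficient of x⁰y⁰) of the Laurent polynomial (x + y + 1 + x⁻¹ + y⁻¹)^{k-1} over ℤ equals the sum over all triples of nonnegative integers (b, c, d) with 2b + c + 2d = k - 1 of (k-1)! / (b!² · c! · d!²). -/
open AddMonoidAlgebra Finset

theorem stmt_4 (k : ℕ) (hk : 1 ≤ k)
    (g : AddMonoidAlgebra ℤ (ℤ × ℤ))
    (hg : g = single (1, 0) 1 + single (0, 1) 1 + single (0, 0) 1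
        + single (-1, 0) 1 + single (0, -1) 1) :
    (g ^ (k - 1)).coeff (0, 0) =
      ∑ t ∈ (Finset.range k ×ˢ Finset.range k ×ˢ Finset.range k).filter
          (fun t => 2 * t.1 + t.2.1 + 2 * t.2.2 = k - 1),
        ((k - 1).factorial /
          (t.1.factorial ^ 2 * t.2.1.factorial * t.2.2.factorial ^ 2) : ℕ) := by
  set n := k - 1 with hn
  set v : Fin 5 → ℤ × ℤ := ![(1, 0), (0, 1), (0, 0), (-1, 0), (0, -1)] with hv
  have hg' : g = ∑ i : Fin 5, single (v i) (1 : ℤ) := by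
    rw [hg, Fin.sum_univ_five]; rfl
  rw [hg', Finset.sum_pow_eq_sum_piAntidiag]
  have hsingle : ∀ m : Fin 5 → ℕ,
      (↑(Nat.multinomial Finset.univ m) * ∏ i : Fin 5, single (v i) (1:ℤ) ^ m i)
        = single (∑ i : Fin 5, m i • v i) ((Nat.multinomial Finset.univ m : ℤ)) := by
    intro m
    have : (∏ i : Fin 5, single (v i) (1:ℤ) ^ m i)
        = single (∑ i : Fin 5, m i • v i) (1 : ℤ) := by
      calc ∏ i : Fin 5, single (v i) (1:ℤ) ^ m i
          = ∏ i : Fin 5, single (m i • v i) ((1:ℤ) ^ m i) := by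
            exact Finset.prod_congr rfl fun i _ => AddMonoidAlgebra.single_pow (v i) 1 (m i)
        _ = single (∑ i : Fin 5, m i • v i) (∏ i : Fin 5, (1:ℤ) ^ m i) :=
            AddMonoidAlgebra.prod_single _ _ _
        _ = single (∑ i : Fin 5, m i • v i) (1 : ℤ) := by simp
    rw [this]
    rw [← nsmul_eq_mul, AddMonoidAlgebra.smul_single]
    congr 1
    simp
  rw [Finset.sum_congr rfl fun m _ => hsingle m]
  rw [show ((∑ m ∈ Finset.piAntidiag Finset.univ n,
      single (∑ i : Fin 5, m i • v i) ((Nat.multinomial Finset.univ m : ℤ))).coeff (0, 0))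
      = ∑ m ∈ Finset.piAntidiag Finset.univ n,
        ((single (∑ i : Fin 5, m i • v i) ((Nat.multinomial Finset.univ m : ℤ))).coeff (0, 0))
      from by rw [AddMonoidAlgebra.coeff_sum, Finset.sum_apply']]
  have hcond : ∀ m : Fin 5 → ℕ,
      (∑ i : Fin 5, m i • v i) = (0, 0) ↔ m 0 = m 3 ∧ m 1 = m 4 := by
    intro m
    simp [Fin.sum_univ_five, hv, Prod.ext_iff]
    omega
  have step : ∀ m ∈ Finset.piAntidiag (Finset.univ : Finset (Fin 5)) n,
      ((single (∑ i : Fin 5, m i • v i) ((Nat.multinomial Finset.univ m : ℤ))).coeff (0, 0))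
      = if m 0 = m 3 ∧ m 1 = m 4 then ((Nat.multinomial Finset.univ m : ℤ)) else 0 := by
    intro m _
    rw [AddMonoidAlgebra.coeff_single, Finsupp.single_apply]
    simp only [hcond m]
  rw [Finset.sum_congr rfl step, ← Finset.sum_filter]
  -- now a bijection
  push_cast
  refine Finset.sum_nbij' (fun m => (m 0, m 2, m 1))
    (fun t => ![t.1, t.2.2, t.2.1, t.1, t.2.2]) ?_ ?_ ?_ ?_ ?_
  · intro m hm
    simp only [Finset.mem_piAntidiag, Finset.mem_filter, Finset.mem_product,
      Finset.mem_range, Fin.sum_univ_five] at hm ⊢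
    omega
  · intro t ht
    simp only [Finset.mem_piAntidiag, Finset.mem_filter, Finset.mem_product,
      Finset.mem_range, Fin.sum_univ_five] at ht ⊢
    refine ⟨⟨?_, fun i _ => Finset.mem_univ i⟩, ?_, ?_⟩ <;> simp <;> omega
  · intro m hm
    simp only [Finset.mem_filter, Finset.mem_piAntidiag] at hm
    funext i
    fin_cases i <;> simp [hm.2.1, hm.2.2]
  · intro t ht
    rfl
  · intro m hm
    simp only [Finset.mem_filter, Finset.mem_piAntidiag, Fin.sum_univ_five] at hm
    obtain ⟨⟨hsum, -⟩, h03, h14⟩ := hm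
    have h1 : (∑ i : Fin 5, m i) = n := by rw [Fin.sum_univ_five]; exact hsum
    have h2 : (∏ i : Fin 5, Nat.factorial (m i))
        = Nat.factorial (m 0) ^ 2 * Nat.factorial (m 2) * Nat.factorial (m 1) ^ 2 := by
      rw [Fin.prod_univ_five, ← h03, ← h14]; ring
    have key : Nat.multinomial Finset.univ m
        = n.factorial / (Nat.factorial (m 0) ^ 2 * Nat.factorial (m 2)
            * Nat.factorial (m 1) ^ 2) := by
      rw [Nat.multinomial, h1, h2]
    dsimp only
    rw [key]
    push_cast
    ring
end

section
/- For every n ≥ 1, the integer Σ_{2b + c + 2d = 2^n - 1} (2^n - 1)! / (b!² · c! · d!²) is odd. -/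
open Finset

lemma even_central (b : ℕ) (hb : 1 ≤ b) : Even ((2 * b).choose b) := by
  obtain ⟨k, rfl⟩ : ∃ k, b = k + 1 := ⟨b - 1, by omega⟩
  have h2 : 2 * (k + 1) = (2 * k + 1) + 1 := by ring
  rw [h2, Nat.choose_succ_succ]
  have hs : (2 * k + 1).choose (k + 1) = (2 * k + 1).choose k := by
    have := Nat.choose_symm (show k + 1 ≤ 2 * k + 1 by omega)
    simpa [show 2 * k + 1 - (k + 1) = k by omega] using this.symm
  rw [hs]
  exact ⟨(2 * k + 1).choose k, rfl⟩

lemma diag_term (b c N : ℕ) (h : 4 * b + c = N) :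
    N.factorial / (b.factorial ^ 2 * c.factorial * b.factorial ^ 2)
      = N.choose c * (4 * b).choose (2 * b) * ((2 * b).choose b) ^ 2 := by
  have hc : c ≤ N := by omega
  have h1 := Nat.choose_mul_factorial_mul_factorial hc
  have h2 := Nat.choose_mul_factorial_mul_factorial (show 2 * b ≤ 4 * b by omega)
  have h3 := Nat.choose_mul_factorial_mul_factorial (show b ≤ 2 * b by omega)
  rw [show N - c = 4 * b by omega] at h1
  rw [show 4 * b - 2 * b = 2 * b by omega] at h2
  rw [show 2 * b - b = b by omega] at h3
  have key : N.factorial =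
      (N.choose c * (4 * b).choose (2 * b) * ((2 * b).choose b) ^ 2) *
        (b.factorial ^ 2 * c.factorial * b.factorial ^ 2) := by
    rw [← h1, ← h2, ← h3]; ring
  rw [key, Nat.mul_div_cancel]
  positivity

theorem stmt_6 (n : ℕ) (hn : 1 ≤ n) :
    Odd (∑ t ∈ (Finset.range (2 ^ n) ×ˢ Finset.range (2 ^ n) ×ˢ
          Finset.range (2 ^ n)).filter
          (fun t => 2 * t.1 + t.2.1 + 2 * t.2.2 = 2 ^ n - 1),
        (2 ^ n - 1).factorial /
          (t.1.factorial ^ 2 * t.2.1.factorial * t.2.2.factorial ^ 2)) := by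
  set N := 2 ^ n - 1 with hN
  set F : ℕ × ℕ × ℕ → ℕ := fun t =>
    N.factorial / (t.1.factorial ^ 2 * t.2.1.factorial * t.2.2.factorial ^ 2) with hF
  set S := (Finset.range (2 ^ n) ×ˢ Finset.range (2 ^ n) ×ˢ
      Finset.range (2 ^ n)).filter
      (fun t => 2 * t.1 + t.2.1 + 2 * t.2.2 = N) with hS
  show Odd (∑ t ∈ S, F t)
  have hpow : 1 ≤ 2 ^ n := Nat.one_le_two_pow
  rw [← Finset.sum_filter_add_sum_filter_not S (fun t => t.1 = t.2.2)]
  have hodd : Odd (∑ t ∈ S.filter (fun t => t.1 = t.2.2), F t) := by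
    have he : ((0 : ℕ), N, (0 : ℕ)) ∈ S.filter (fun t => t.1 = t.2.2) := by
      simp only [hS, Finset.mem_filter, Finset.mem_product, Finset.mem_range]
      refine ⟨⟨⟨by omega, by omega, by omega⟩, by omega⟩, by simp⟩
    rw [← Finset.add_sum_erase _ F he]
    have hFe : F (0, N, 0) = 1 := by
      simp [hF, Nat.factorial, Nat.div_self (Nat.factorial_pos N)]
    rw [hFe]
    refine Even.one_add (Finset.even_sum _ ?_)
    rintro ⟨b, c, d⟩ ht
    rw [Finset.mem_erase] at ht
    obtain ⟨hne, ht⟩ := ht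
    simp only [hS, Finset.mem_filter, Finset.mem_product, Finset.mem_range] at ht
    obtain ⟨⟨_, hcon⟩, hbd⟩ := ht
    try dsimp only at hbd hcon
    subst hbd
    have hb1 : 1 ≤ b := by
      rcases Nat.eq_zero_or_pos b with hb0 | hb0
      · exfalso; apply hne; subst hb0
        have : c = N := by omega
        subst this; rfl
      · exact hb0
    have h4 : 4 * b + c = N := by omega
    have := diag_term b c N h4
    simp only [hF]
    rw [this]
    have he2 : Even (((2 * b).choose b) ^ 2) := by
      rw [sq]; exact (even_central b hb1).mul_right _
    exact he2.mul_left _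
  have heven : Even (∑ t ∈ S.filter (fun t => ¬ t.1 = t.2.2), F t) := by
    set A := S.filter (fun t => ¬ t.1 = t.2.2) with hA
    rw [← Finset.sum_filter_add_sum_filter_not A (fun t => t.1 < t.2.2)]
    have hmem : ∀ t : ℕ × ℕ × ℕ, t ∈ A ↔ (t.1 < 2 ^ n ∧ t.2.1 < 2 ^ n ∧ t.2.2 < 2 ^ n) ∧
        2 * t.1 + t.2.1 + 2 * t.2.2 = N ∧ t.1 ≠ t.2.2 := by
      intro t
      simp only [hA, hS, Finset.mem_filter, Finset.mem_product, Finset.mem_range]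
      tauto
    have hbij : ∑ t ∈ A.filter (fun t => t.1 < t.2.2), F t
        = ∑ t ∈ A.filter (fun t => ¬ t.1 < t.2.2), F t := by
      refine Finset.sum_nbij' (fun t => (t.2.2, t.2.1, t.1)) (fun t => (t.2.2, t.2.1, t.1))
        ?_ ?_ ?_ ?_ ?_
      · rintro ⟨b, c, d⟩ ht
        rw [Finset.mem_filter] at ht ⊢
        rw [hmem] at ht ⊢
        dsimp only at ht ⊢
        obtain ⟨⟨⟨h1, h2, h3⟩, h4, h5⟩, h6⟩ := ht
        exact ⟨⟨⟨h3, h2, h1⟩, by omega, Ne.symm h5⟩, by omega⟩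
      · rintro ⟨b, c, d⟩ ht
        rw [Finset.mem_filter] at ht ⊢
        rw [hmem] at ht ⊢
        dsimp only at ht ⊢
        obtain ⟨⟨⟨h1, h2, h3⟩, h4, h5⟩, h6⟩ := ht
        exact ⟨⟨⟨h3, h2, h1⟩, by omega, Ne.symm h5⟩, by omega⟩
      · rintro ⟨b, c, d⟩ _; rfl
      · rintro ⟨b, c, d⟩ _; rfl
      · rintro ⟨b, c, d⟩ _
        simp only [hF]
        ring_nf
    rw [hbij]
    exact ⟨_, rfl⟩
  exact hodd.add_even heven
end

section
/- For every n ≥ 1, the integer Σ_{2b + c + 2d = 3^n - 1} (3^n - 1)! / (b!² · c! · d!²) is congruent to (-1)^n modulo 3. -/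
open Finset

namespace Stmt7Aux3


lemma lucas3 (n k : ℕ) : ((n.choose k : ℕ) : ZMod 3) =
    ((n % 3).choose (k % 3) : ℕ) * ((n / 3).choose (k / 3) : ℕ) := by
  have h := @Choose.choose_modEq_choose_mod_mul_choose_div n k 3 ⟨by norm_num⟩
  have h2 := (ZMod.intCast_eq_intCast_iff _ _ _).mpr h
  push_cast at h2 ⊢
  exact h2

def S (N : ℕ) : Finset (ℕ × ℕ × ℕ) :=
  (Finset.range (N + 1) ×ˢ Finset.range (N + 1) ×ˢ Finset.range (N + 1)).filter
    (fun t => 2 * t.1 + t.2.1 + 2 * t.2.2 = N)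

lemma mem_S {N : ℕ} {t : ℕ × ℕ × ℕ} : t ∈ S N ↔ 2 * t.1 + t.2.1 + 2 * t.2.2 = N := by
  obtain ⟨b, c, d⟩ := t
  simp only [S, mem_filter, mem_product, mem_range]
  omega

def TT (N : ℕ) (t : ℕ × ℕ × ℕ) : ℕ :=
  N.choose (2 * t.1) * (2 * t.1).choose t.1 * (N - 2 * t.1).choose t.2.1 *
    (2 * t.2.2).choose t.2.2

lemma term_eq {N b c d : ℕ} (h : 2 * b + c + 2 * d = N) :
    N.factorial / (b.factorial ^ 2 * c.factorial * d.factorial ^ 2) = TT N (b, c, d) := by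
  have hb2 : 2 * b ≤ N := by omega
  have hA := Nat.choose_mul_factorial_mul_factorial hb2
  have hB := Nat.choose_mul_factorial_mul_factorial (show b ≤ 2 * b by omega)
  have hC := Nat.choose_mul_factorial_mul_factorial (show c ≤ N - 2 * b by omega)
  have hD := Nat.choose_mul_factorial_mul_factorial (show d ≤ 2 * d by omega)
  rw [show 2 * b - b = b by omega] at hB
  rw [show 2 * d - d = d by omega] at hD
  rw [show N - 2 * b - c = 2 * d by omega] at hC
  have key : N.factorial = TT N (b, c, d) * (b.factorial ^ 2 * c.factorial * d.factorial ^ 2) := by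
    rw [← hA, ← hB, ← hC, ← hD]
    unfold TT
    ring
  rw [key, Nat.mul_div_cancel _ (by positivity)]


lemma pointwise (M b c d : ℕ) (h : 2 * b + c + 2 * d = 3 * M + 2) :
    ((TT (3 * M + 2) (b, c, d) : ℕ) : ZMod 3) =
      (if b % 3 = 1 ∧ c % 3 = 0 ∧ d % 3 = 0 then
        2 * ((TT M (b / 3, c / 3, d / 3) : ℕ) : ZMod 3) else 0)
      + (if b % 3 = 0 ∧ c % 3 = 2 ∧ d % 3 = 0 then
        1 * ((TT M (b / 3, c / 3, d / 3) : ℕ) : ZMod 3) else 0)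
      + (if b % 3 = 0 ∧ c % 3 = 0 ∧ d % 3 = 1 then
        2 * ((TT M (b / 3, c / 3, d / 3) : ℕ) : ZMod 3) else 0) := by
  unfold TT
  push_cast
  rw [lucas3 (3 * M + 2) (2 * b), lucas3 (2 * b) b, lucas3 (3 * M + 2 - 2 * b) c,
    lucas3 (2 * d) d]
  have hb : b % 3 < 3 := Nat.mod_lt _ (by norm_num)
  have hc : c % 3 < 3 := Nat.mod_lt _ (by norm_num)
  have hd : d % 3 < 3 := Nat.mod_lt _ (by norm_num)
  interval_cases hβ : b % 3 <;> interval_cases hγ : c % 3 <;> interval_cases hδ : d % 3 <;>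
    try (exfalso; omega)
  · rw [show (3 * M + 2) % 3 = 2 by omega, show (3 * M + 2) / 3 = M by omega,
        show 2 * b % 3 = 0 by omega, show 2 * b / 3 = 2 * (b / 3) by omega,
        show (3 * M + 2 - 2 * b) % 3 = 2 by omega,
        show (3 * M + 2 - 2 * b) / 3 = M - 2 * (b / 3) by omega,
        show 2 * d % 3 = 2 by omega, show 2 * d / 3 = 2 * (d / 3) by omega]
    norm_num [Nat.choose]
    try ring
  · rw [show 2 * d % 3 = 1 by omega]
    norm_num [Nat.choose]
  · rw [show (3 * M + 2) % 3 = 2 by omega, show (3 * M + 2) / 3 = M by omega,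
        show 2 * b % 3 = 0 by omega, show 2 * b / 3 = 2 * (b / 3) by omega,
        show (3 * M + 2 - 2 * b) % 3 = 2 by omega,
        show (3 * M + 2 - 2 * b) / 3 = M - 2 * (b / 3) by omega,
        show 2 * d % 3 = 0 by omega, show 2 * d / 3 = 2 * (d / 3) by omega]
    norm_num [Nat.choose]
    try ring
  · rw [show (3 * M + 2) % 3 = 2 by omega, show (3 * M + 2) / 3 = M by omega,
        show 2 * b % 3 = 2 by omega, show 2 * b / 3 = 2 * (b / 3) by omega,
        show (3 * M + 2 - 2 * b) % 3 = 0 by omega,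
        show (3 * M + 2 - 2 * b) / 3 = M - 2 * (b / 3) by omega,
        show 2 * d % 3 = 0 by omega, show 2 * d / 3 = 2 * (d / 3) by omega]
    norm_num [Nat.choose]
    try ring
  · rw [show (3 * M + 2 - 2 * b) % 3 = 0 by omega]
    norm_num [Nat.choose]
  · rw [show 2 * d % 3 = 1 by omega]
    norm_num [Nat.choose]
  · rw [show 2 * d % 3 = 1 by omega]
    norm_num [Nat.choose]
  · rw [show 2 * b % 3 = 1 by omega]
    norm_num [Nat.choose]
  · rw [show 2 * b % 3 = 1 by omega]
    norm_num [Nat.choose]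



lemma part (M β γ δ : ℕ) (hs : 2 * β + γ + 2 * δ = 2) (w : ZMod 3) :
    (∑ t ∈ S (3 * M + 2),
      if t.1 % 3 = β ∧ t.2.1 % 3 = γ ∧ t.2.2 % 3 = δ then
        w * ((TT M (t.1 / 3, t.2.1 / 3, t.2.2 / 3) : ℕ) : ZMod 3) else 0)
      = w * ∑ t ∈ S M, ((TT M t : ℕ) : ZMod 3) := by
  rw [← Finset.sum_filter, Finset.mul_sum]
  apply Finset.sum_nbij' (i := fun t : ℕ × ℕ × ℕ => (t.1 / 3, t.2.1 / 3, t.2.2 / 3))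
    (j := fun s : ℕ × ℕ × ℕ => (3 * s.1 + β, 3 * s.2.1 + γ, 3 * s.2.2 + δ))
  · intro t ht
    obtain ⟨b, c, d⟩ := t
    rw [mem_filter, mem_S] at ht
    rw [mem_S]
    dsimp only at ht ⊢
    omega
  · intro s hs'
    obtain ⟨b, c, d⟩ := s
    rw [mem_S] at hs'
    rw [mem_filter, mem_S]
    dsimp only at hs' ⊢
    refine ⟨by omega, by omega, by omega, by omega⟩
  · intro t ht
    obtain ⟨b, c, d⟩ := t
    rw [mem_filter, mem_S] at ht
    obtain ⟨h1, h2, h3, h4⟩ := ht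
    dsimp only at *
    simp only [Prod.mk.injEq]
    refine ⟨by omega, by omega, by omega⟩
  · intro s hs'
    obtain ⟨b, c, d⟩ := s
    simp only [Prod.mk.injEq]
    refine ⟨by omega, by omega, by omega⟩
  · intro t ht
    rfl


lemma key (M : ℕ) :
    (∑ t ∈ S (3 * M + 2), ((TT (3 * M + 2) t : ℕ) : ZMod 3)) =
      2 * ∑ t ∈ S M, ((TT M t : ℕ) : ZMod 3) := by
  have step : ∀ t ∈ S (3 * M + 2), ((TT (3 * M + 2) t : ℕ) : ZMod 3) =
      (if t.1 % 3 = 1 ∧ t.2.1 % 3 = 0 ∧ t.2.2 % 3 = 0 then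
        2 * ((TT M (t.1 / 3, t.2.1 / 3, t.2.2 / 3) : ℕ) : ZMod 3) else 0)
      + (if t.1 % 3 = 0 ∧ t.2.1 % 3 = 2 ∧ t.2.2 % 3 = 0 then
        1 * ((TT M (t.1 / 3, t.2.1 / 3, t.2.2 / 3) : ℕ) : ZMod 3) else 0)
      + (if t.1 % 3 = 0 ∧ t.2.1 % 3 = 0 ∧ t.2.2 % 3 = 1 then
        2 * ((TT M (t.1 / 3, t.2.1 / 3, t.2.2 / 3) : ℕ) : ZMod 3) else 0) := by
    intro t ht
    obtain ⟨b, c, d⟩ := t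
    rw [mem_S] at ht
    dsimp only at ht ⊢
    exact pointwise M b c d ht
  rw [Finset.sum_congr rfl step, Finset.sum_add_distrib, Finset.sum_add_distrib,
    part M 1 0 0 (by norm_num), part M 0 2 0 (by norm_num), part M 0 0 1 (by norm_num)]
  have h3 : (3 : ZMod 3) = 0 := rfl
  linear_combination (∑ t ∈ S M, ((TT M t : ℕ) : ZMod 3)) * h3

lemma main (n : ℕ) :
    ((∑ t ∈ S (3 ^ n - 1), TT (3 ^ n - 1) t : ℕ) : ZMod 3) = 2 ^ n := by
  induction n with
  | zero => decide
  | succ n ih =>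
    have h1 : (1 : ℕ) ≤ 3 ^ n := Nat.one_le_pow n 3 (by norm_num)
    have h : 3 ^ (n + 1) - 1 = 3 * (3 ^ n - 1) + 2 := by
      rw [pow_succ]; omega
    rw [h]
    push_cast
    rw [key]
    push_cast at ih
    rw [ih]
    ring

end Stmt7Aux3

open Stmt7Aux3 in
theorem stmt_7 (n : ℕ) (hn : 1 ≤ n) :
    ((∑ t ∈ (Finset.range (3 ^ n) ×ˢ Finset.range (3 ^ n) ×ˢ
          Finset.range (3 ^ n)).filter
          (fun t => 2 * t.1 + t.2.1 + 2 * t.2.2 = 3 ^ n - 1),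
        (3 ^ n - 1).factorial /
          (t.1.factorial ^ 2 * t.2.1.factorial * t.2.2.factorial ^ 2) : ℕ) : ℤ) ≡
      (-1) ^ n [ZMOD 3] := by
  have h1 : (1 : ℕ) ≤ 3 ^ n := Nat.one_le_pow n 3 (by norm_num)
  have hr : Finset.range (3 ^ n) = Finset.range ((3 ^ n - 1) + 1) := by
    congr 1; omega
  rw [hr]
  apply (ZMod.intCast_eq_intCast_iff _ _ 3).mp
  rw [Int.cast_natCast]
  have hsum : (∑ t ∈ S (3 ^ n - 1),
      ((3 ^ n - 1).factorial /
        (t.1.factorial ^ 2 * t.2.1.factorial * t.2.2.factorial ^ 2) : ℕ))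
      = ∑ t ∈ S (3 ^ n - 1), TT (3 ^ n - 1) t := by
    apply Finset.sum_congr rfl
    intro t ht
    obtain ⟨b, c, d⟩ := t
    rw [mem_S] at ht
    dsimp only at ht ⊢
    exact term_eq ht
  have hS : (Finset.range (3 ^ n - 1 + 1) ×ˢ Finset.range (3 ^ n - 1 + 1) ×ˢ
        Finset.range (3 ^ n - 1 + 1)).filter
        (fun t => 2 * t.1 + t.2.1 + 2 * t.2.2 = 3 ^ n - 1) = S (3 ^ n - 1) := rfl
  rw [hS, hsum, main]
  have h2 : (((-1) ^ n : ℤ) : ZMod 3) = (-1 : ZMod 3) ^ n := by push_cast; ring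
  rw [h2, show (2 : ZMod 3) = -1 from by decide]
end

section
/- Let p be a prime, let c_p denote the constant coefficient of g(x,y)^{p-1} in (ℤ/pℤ)[x,y,x⁻¹,y⁻¹] where g(x,y) = x + y + 1 + x⁻¹ + y⁻¹. Then for every n ≥ 1, the constant coefficient of g(x,y)^{p^n - 1} over ℤ/pℤ equals c_p^n. -/
open AddMonoidAlgebra

section AuxStmt8
variable {p : ℕ} [hp : Fact p.Prime]

private lemma stmt8_charP : CharP (AddMonoidAlgebra (ZMod p) (ℤ × ℤ)) p := by
  have hinj : Function.Injective (AddMonoidAlgebra.singleZeroRingHom (R := ZMod p) (M := ℤ × ℤ)) := by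
    intro a b hab
    simpa using Finsupp.single_injective (0 : ℤ × ℤ) (congrArg AddMonoidAlgebra.coeff hab)
  exact charP_of_injective_ringHom hinj p

private lemma stmt8_pow_char (f : AddMonoidAlgebra (ZMod p) (ℤ × ℤ)) :
    f ^ p = f.coeff.support.sum (fun a => single (p • a) (f.coeff a)) := by
  have := stmt8_charP (p := p)
  conv_lhs => rw [← AddMonoidAlgebra.sum_coeff_single f]
  rw [Finsupp.sum, sum_pow_char]
  refine Finset.sum_congr rfl fun a _ => ?_
  rw [AddMonoidAlgebra.single_pow, ZMod.pow_card]

private lemma stmt8_supp_pow_bound (g : AddMonoidAlgebra (ZMod p) (ℤ × ℤ))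
    (hgs : ∀ c ∈ g.coeff.support, |c.1| ≤ 1 ∧ |c.2| ≤ 1) (m : ℕ) :
    ∀ a ∈ (g ^ m).coeff.support, |a.1| ≤ (m : ℤ) ∧ |a.2| ≤ (m : ℤ) := by
  induction m with
  | zero =>
    intro a ha
    rw [pow_zero] at ha
    have : a = 0 := by
      have := Finsupp.support_single_subset (a := (0 : ℤ × ℤ)) (b := (1 : ZMod p))
      have h1 : (1 : AddMonoidAlgebra (ZMod p) (ℤ × ℤ)) = single 0 1 := rfl
      rw [h1] at ha
      simpa using this ha
    simp [this]
  | succ m ih =>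
    intro a ha
    rw [pow_succ] at ha
    obtain ⟨b, hb, c, hc, rfl⟩ := Finset.mem_add.mp (AddMonoidAlgebra.support_coeff_mul_subset _ _ ha)
    obtain ⟨hb1, hb2⟩ := ih b hb
    obtain ⟨hc1, hc2⟩ := hgs c hc
    constructor
    · calc |(b + c).1| ≤ |b.1| + |c.1| := abs_add_le _ _
        _ ≤ (m : ℤ) + 1 := add_le_add hb1 hc1
        _ = ((m + 1 : ℕ) : ℤ) := by push_cast; ring
    · calc |(b + c).2| ≤ |b.2| + |c.2| := abs_add_le _ _
        _ ≤ (m : ℤ) + 1 := add_le_add hb2 hc2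
        _ = ((m + 1 : ℕ) : ℤ) := by push_cast; ring

private lemma stmt8_key (f h : AddMonoidAlgebra (ZMod p) (ℤ × ℤ))
    (hh : ∀ b ∈ h.coeff.support, |b.1| ≤ (p : ℤ) - 1 ∧ |b.2| ≤ (p : ℤ) - 1) :
    (f ^ p * h).coeff (0, 0) = f.coeff (0, 0) * h.coeff (0, 0) := by
  rw [stmt8_pow_char, Finset.sum_mul, AddMonoidAlgebra.coeff_sum, Finsupp.finset_sum_apply]
  have hterm : ∀ a : ℤ × ℤ, (single (p • a) (f.coeff a) * h).coeff (0, 0) = f.coeff a * h.coeff (-(p • a)) := by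
    intro a
    rw [AddMonoidAlgebra.coeff_single_mul_apply]
    congr 2
    exact Prod.ext (by simp) (by simp)
  rw [Finset.sum_congr rfl fun a _ => hterm a]
  have hzero : ∀ a : ℤ × ℤ, a ≠ (0, 0) → h.coeff (-(p • a)) = 0 := by
    intro a ha
    by_contra hne
    have hmem : -(p • a) ∈ h.coeff.support := Finsupp.mem_support_iff.mpr hne
    obtain ⟨h1, h2⟩ := hh _ hmem
    have hp1 : (1 : ℤ) ≤ (p : ℤ) := by exact_mod_cast hp.out.one_lt.le
    have ha' : a.1 ≠ 0 ∨ a.2 ≠ 0 := by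
      by_contra hc
      push_neg at hc
      exact ha (Prod.ext hc.1 hc.2)
    have e1 : (-(p • a)).1 = -((p : ℤ) * a.1) := by simp
    have e2 : (-(p • a)).2 = -((p : ℤ) * a.2) := by simp
    rcases ha' with h' | h'
    · rw [e1, abs_neg, abs_mul, Nat.abs_cast] at h1
      have : (1 : ℤ) ≤ |a.1| := Int.one_le_abs (by simpa using h')
      nlinarith
    · rw [e2, abs_neg, abs_mul, Nat.abs_cast] at h2
      have : (1 : ℤ) ≤ |a.2| := Int.one_le_abs (by simpa using h')
      nlinarith
  rw [Finset.sum_eq_single ((0, 0) : ℤ × ℤ)]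
  · norm_num
  · intro b hb hbne
    rw [hzero b hbne, mul_zero]
  · intro hnm
    rw [Finsupp.notMem_support_iff.mp hnm, zero_mul]

end AuxStmt8

theorem stmt_8 (p : ℕ) (hp : p.Prime)
    (g : AddMonoidAlgebra (ZMod p) (ℤ × ℤ))
    (hg : g = single (1, 0) 1 + single (0, 1) 1 + single (0, 0) 1
        + single (-1, 0) 1 + single (0, -1) 1)
    (cp : ZMod p) (hcp : cp = (g ^ (p - 1)).coeff (0, 0)) :
    ∀ n : ℕ, 1 ≤ n → (g ^ (p ^ n - 1)).coeff (0, 0) = cp ^ n := by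
  haveI : Fact p.Prime := ⟨hp⟩
  have h1p : 1 ≤ p := hp.one_lt.le
  have hgs : ∀ c ∈ g.coeff.support, |c.1| ≤ (1 : ℤ) ∧ |c.2| ≤ 1 := by
    intro c hc
    rw [hg] at hc
    simp only [AddMonoidAlgebra.coeff_add] at hc
    have leaf : ∀ (a : ℤ × ℤ), c ∈ (single a (1 : ZMod p)).coeff.support → c = a := fun a h =>
      Finset.mem_singleton.mp (Finsupp.support_single_subset h)
    rcases Finset.mem_union.mp (Finsupp.support_add hc) with hc | hc
    · rcases Finset.mem_union.mp (Finsupp.support_add hc) with hc | hc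
      · rcases Finset.mem_union.mp (Finsupp.support_add hc) with hc | hc
        · rcases Finset.mem_union.mp (Finsupp.support_add hc) with hc | hc
          · obtain rfl := leaf _ hc; norm_num
          · obtain rfl := leaf _ hc; norm_num
        · obtain rfl := leaf _ hc; norm_num
      · obtain rfl := leaf _ hc; norm_num
    · obtain rfl := leaf _ hc; norm_num
  have hbound : ∀ b ∈ (g ^ (p - 1)).coeff.support, |b.1| ≤ (p : ℤ) - 1 ∧ |b.2| ≤ (p : ℤ) - 1 := by
    intro b hb
    have := stmt8_supp_pow_bound g hgs (p - 1) b hb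
    rwa [Nat.cast_sub h1p, Nat.cast_one] at this
  have main : ∀ n : ℕ, (g ^ (p ^ (n + 1) - 1)).coeff (0, 0) = cp ^ (n + 1) := by
    intro n
    induction n with
    | zero => simpa [pow_one] using hcp.symm
    | succ n ih =>
      have hk : 1 ≤ p ^ n := Nat.one_le_pow _ _ hp.pos
      have hk1 : 1 ≤ p ^ (n + 1) := Nat.one_le_pow _ _ hp.pos
      have hk2 : 1 ≤ p ^ (n + 2) := Nat.one_le_pow _ _ hp.pos
      have he : p ^ (n + 2) - 1 = (p ^ (n + 1) - 1) * p + (p - 1) := by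
        zify [hk1, hk2, h1p]
        ring
      rw [he, pow_add, pow_mul, stmt8_key (g ^ (p ^ (n + 1) - 1)) (g ^ (p - 1)) hbound,
        ih, ← hcp, ← pow_succ]
  intro n hn
  obtain ⟨m, rfl⟩ := Nat.exists_eq_add_of_le hn
  rw [add_comm]
  exact main m
end

section
/- Let p be a prime and 0 ≤ i ≤ p - 2. The coefficient of x^{p-2-i} y^i in the expansion of (x + y + 1 + x⁻¹ + y⁻¹)^{p-1} over ℤ equals (p-1)! / ((p-2-i)! · i! · 1!), and this integer is not divisible by p. -/
open AddMonoidAlgebra Finset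

theorem stmt_10 (p : ℕ) (hp : p.Prime) (i : ℕ) (hi : i ≤ p - 2)
    (g : AddMonoidAlgebra ℤ (ℤ × ℤ))
    (hg : g = single (1, 0) 1 + single (0, 1) 1 + single (0, 0) 1
        + single (-1, 0) 1 + single (0, -1) 1) :
    (g ^ (p - 1)).coeff (((p - 2 - i : ℕ) : ℤ), (i : ℤ)) =
      ((p - 1).factorial / ((p - 2 - i).factorial * i.factorial * Nat.factorial 1) : ℕ) ∧
    ¬ (p : ℕ) ∣ (p - 1).factorial / ((p - 2 - i).factorial * i.factorial * Nat.factorial 1) := by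
  have hp2 : 2 ≤ p := hp.two_le
  set n := p - 1 with hn
  set a := p - 2 - i with ha
  clear_value n a
  have hai : a + i + 1 = n := by omega
  set S : Finset (ℤ × ℤ) := {(1,0), (0,1), (0,0), (-1,0), (0,-1)} with hSdef
  have hgS : g = ∑ s ∈ S, single s (1:ℤ) := by
    rw [hg, hSdef]
    rw [Finset.sum_insert (by decide), Finset.sum_insert (by decide),
      Finset.sum_insert (by decide), Finset.sum_insert (by decide), Finset.sum_singleton]
    ring
  have hexp : g ^ n = ∑ k ∈ piAntidiag S n,
      single (∑ s ∈ S, k s • s) ((Nat.multinomial S k : ℤ)) := by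
    rw [hgS, Finset.sum_pow_eq_sum_piAntidiag]
    refine Finset.sum_congr rfl fun k hk => ?_
    have : ∏ s ∈ S, single s (1:ℤ) ^ k s = single (∑ s ∈ S, k s • s) (1:ℤ) := by
      simp_rw [AddMonoidAlgebra.single_pow, one_pow]
      rw [AddMonoidAlgebra.prod_single, Finset.prod_const_one]
    rw [this, ← nsmul_eq_mul, AddMonoidAlgebra.smul_single]
    simp
  set k₀ : ℤ × ℤ → ℕ := fun s =>
    if s = (1,0) then a else if s = (0,1) then i else if s = (0,0) then 1 else 0 with hk₀
  have hk₀mem : k₀ ∈ piAntidiag S n := by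
    rw [Finset.mem_piAntidiag]
    constructor
    · rw [hSdef, Finset.sum_insert (by decide), Finset.sum_insert (by decide),
        Finset.sum_insert (by decide), Finset.sum_insert (by decide), Finset.sum_singleton]
      simp only [hk₀]
      norm_num [Prod.ext_iff]
      omega
    · intro s hs
      by_contra hsS
      apply hs
      rw [hk₀]
      have h1 : s ≠ (1,0) := by rintro rfl; exact hsS (by decide)
      have h2 : s ≠ (0,1) := by rintro rfl; exact hsS (by decide)
      have h3 : s ≠ (0,0) := by rintro rfl; exact hsS (by decide)
      have h0 : s ≠ 0 := by rintro rfl; exact hsS (by decide)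
      simp [h1, h2, h3, h0]
  set target : ℤ × ℤ := (((a : ℕ) : ℤ), (i : ℤ)) with htarget
  have hsum_k₀ : ∑ s ∈ S, k₀ s • s = target := by
    rw [hSdef, Finset.sum_insert (by decide), Finset.sum_insert (by decide),
      Finset.sum_insert (by decide), Finset.sum_insert (by decide), Finset.sum_singleton]
    simp only [hk₀]
    norm_num [Prod.ext_iff, htarget, Prod.smul_mk]
  have huniq : ∀ k ∈ piAntidiag S n, k ≠ k₀ → (single (∑ s ∈ S, k s • s) ((Nat.multinomial S k : ℤ))).coeff target = 0 := by
    intro k hk hne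
    rw [AddMonoidAlgebra.coeff_single, Finsupp.single_apply, if_neg]
    intro heq
    apply hne
    rw [Finset.mem_piAntidiag] at hk
    obtain ⟨hksum, hksupp⟩ := hk
    rw [hSdef, Finset.sum_insert (by decide), Finset.sum_insert (by decide),
      Finset.sum_insert (by decide), Finset.sum_insert (by decide), Finset.sum_singleton] at heq hksum
    simp only [htarget, Prod.smul_mk, smul_eq_mul, Prod.mk_add_mk, Prod.mk.injEq,
      mul_one, mul_zero, mul_neg, nsmul_eq_mul] at heq
    obtain ⟨he1, he2⟩ := heq
    have hv : k (1,0) = a ∧ k (0,1) = i ∧ k (0,0) = 1 ∧ k (-1,0) = 0 ∧ k (0,-1) = 0 := by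
      omega
    funext s
    by_cases h1 : s = (1,0); · rw [h1, hv.1]; norm_num [hk₀, Prod.ext_iff]
    by_cases h2 : s = (0,1); · rw [h2, hv.2.1]; norm_num [hk₀, Prod.ext_iff]
    by_cases h3 : s = (0,0); · rw [h3, hv.2.2.1]; norm_num [hk₀, Prod.ext_iff]
    by_cases h4 : s = (-1,0); · rw [h4, hv.2.2.2.1]; norm_num [hk₀, Prod.ext_iff]
    by_cases h5 : s = (0,-1); · rw [h5, hv.2.2.2.2]; norm_num [hk₀, Prod.ext_iff]
    have hz : k s = 0 := by
      by_contra hz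
      have := hksupp s hz
      rw [hSdef] at this
      simp only [Finset.mem_insert, Finset.mem_singleton] at this
      tauto
    rw [hz]
    norm_num [hk₀, Prod.ext_iff]
    rw [if_neg (fun h => h1 (Prod.ext h.1 h.2)), if_neg (fun h => h2 (Prod.ext h.1 h.2)),
      if_neg (fun h => h3 (Prod.ext h.1 h.2))]
  have hcoeff : (g ^ n).coeff target = (Nat.multinomial S k₀ : ℤ) := by
    rw [hexp, AddMonoidAlgebra.coeff_sum, Finsupp.finset_sum_apply]
    rw [Finset.sum_eq_single_of_mem k₀ hk₀mem huniq]
    rw [hsum_k₀, AddMonoidAlgebra.coeff_single, Finsupp.single_apply, if_pos rfl]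
  have hmul : Nat.multinomial S k₀ = n.factorial / (a.factorial * i.factorial * Nat.factorial 1) := by
    have hsumk : ∑ s ∈ S, k₀ s = n := (Finset.mem_piAntidiag.mp hk₀mem).1
    rw [Nat.multinomial, hsumk]
    congr 1
    · rw [hSdef, Finset.prod_insert (by decide), Finset.prod_insert (by decide),
        Finset.prod_insert (by decide), Finset.prod_insert (by decide), Finset.prod_singleton]
      simp only [hk₀]
      norm_num [Prod.ext_iff, Nat.factorial]
  have hdvd : a.factorial * i.factorial * Nat.factorial 1 ∣ n.factorial := by
    have h1 : a.factorial * i.factorial ∣ (p-2).factorial := by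
      refine ⟨(p-2).choose i, ?_⟩
      rw [ha, ← Nat.choose_mul_factorial_mul_factorial hi]
      ring
    simp only [Nat.factorial_one, mul_one]
    exact h1.trans (Nat.factorial_dvd_factorial (by omega))
  constructor
  · rw [hcoeff]
    exact_mod_cast hmul
  · intro hpd
    have hfac : p ∣ n.factorial := by
      have hc := Nat.div_mul_cancel hdvd
      calc p ∣ n.factorial / (a.factorial * i.factorial * Nat.factorial 1) *
            (a.factorial * i.factorial * Nat.factorial 1) := hpd.mul_right _
        _ = n.factorial := hc
    have := (Nat.Prime.dvd_factorial hp).mp hfac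
    omega
end

section
/- Let F be a field of characteristic not 2 or 3, and x, y nonzero elements with x + y + 1 + x⁻¹ + y⁻¹ = 0 and (xy - 1)(x + y) ≠ 0. Set λ = -x/(x+y). Then λ² + λ - 1 - x₁ - x₂ = -1 and -(λ+1)·(-1) - λ - 1 = 0, where x₁ = -1/(1+x+y) and x₂ = -xy/(x+y+xy). (This is the key computation showing that on the elliptic curve E₄(1): v² + uv + v = u³ + u², the chord through the points (x₁, -x/(1+x+y)) and (x₂, -x/(x+y+xy)) leads to the third point (-1, 0).) -/
theorem stmt_17 {F : Type*} [Field F]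
    (hchar2 : ringChar F ≠ 2) (hchar3 : ringChar F ≠ 3)
    (x y : F) (hx : x ≠ 0) (hy : y ≠ 0)
    (heq : x + y + 1 + x⁻¹ + y⁻¹ = 0)
    (hne : (x * y - 1) * (x + y) ≠ 0)
    (lam x₁ x₂ : F)
    (hlam : lam = -x / (x + y))
    (hx₁ : x₁ = -1 / (1 + x + y))
    (hx₂ : x₂ = -(x * y) / (x + y + x * y)) :
    lam ^ 2 + lam - 1 - x₁ - x₂ = -1 ∧ -(lam + 1) * (-1) - lam - 1 = 0 := by
  have key : x^2*y + x*y^2 + x*y + x + y = 0 := by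
    field_simp at heq
    linear_combination heq
  have hxy : x + y ≠ 0 := fun h => hne (by rw [h, mul_zero])
  have h1 : 1 + x + y ≠ 0 := by
    intro h
    have hxy1 : x + y = -1 := by linear_combination h
    have : (-1 : F) = 0 := by linear_combination key - x*y*h - hxy1
    simp at this
  have h2 : x + y + x * y ≠ 0 := by
    intro h
    have : (x + y)^2 = 0 := by linear_combination -key + (x+y+1)*h
    exact hxy (pow_eq_zero_iff (n := 2) (by norm_num) |>.mp this)
  subst hlam hx₁ hx₂
  constructor
  · field_simp [hxy, h1, h2]
    linear_combination (x^2 + x*y + y^2) * key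
  · ring
end
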